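/- arXiv:2004.14286 — 5 statements merged into one kernel-verified Lean document; each statement's English description precedes it below -/
import Mathlib

section
/- Let L be a complete lattice, Q a partially ordered set equipped with a superlinear family of translations T, and f : L → Q a monotone map that respects joins. Define T♭_ε := f♭ ∘ T_ε ∘ f : L → L for each ε ≥ 0. Then: (i) each T♭_ε is monotone and satisfies x ≤ T♭_ε(x) for all x ∈ L; (ii) T♭_{ε₂}(T♭_{ε₁}(x)) ≤ T♭_{ε₁+ε₂}(x) for all ε₁, ε₂ ≥ 0 and x ∈ L (so T♭ is a superlinear family of translations on L); and (iii) f(T♭_ε(x)) ≤ T_ε(f(x)) for all x ∈ L and ε ≥ 0. -/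
open NNReal

/-- A superlinear family of translations on a poset `Q`: monotone maps `T ε : Q → Q`
indexed by `ε ∈ [0,∞)` with `q ≤ T ε q` and `T ε₂ (T ε₁ q) ≤ T (ε₁ + ε₂) q`. -/
structure SuperlinearFamily (Q : Type*) [PartialOrder Q] where
  trans : ℝ≥0 → Q →o Q
  le_self : ∀ (ε : ℝ≥0) (q : Q), q ≤ trans ε q
  superlinear : ∀ (ε₁ ε₂ : ℝ≥0) (q : Q), trans ε₂ (trans ε₁ q) ≤ trans (ε₁ + ε₂) q

/-- The lower approximation translation `T♭_ε = f♭ ∘ T_ε ∘ f` on a complete lattice `L`,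
where `f : L → Q` respects joins and `Q` carries a superlinear family of translations `T`,
is a superlinear family of translations on `L`, and moreover `f (T♭_ε x) ≤ T_ε (f x)`. -/
theorem lower_approximation_translation {L : Type*} [CompleteLattice L]
    {Q : Type*} [PartialOrder Q] (T : SuperlinearFamily Q)
    (f : L → Q) (hmono : Monotone f)
    (hjoins : ∀ (S : Set L) (q : Q), (∀ x ∈ S, f x ≤ q) → f (sSup S) ≤ q) :
    (∀ ε : ℝ≥0, Monotone (fun x : L => sSup {y : L | f y ≤ T.trans ε (f x)})) ∧
    (∀ (ε : ℝ≥0) (x : L), x ≤ sSup {y : L | f y ≤ T.trans ε (f x)}) ∧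
    (∀ (ε₁ ε₂ : ℝ≥0) (x : L),
      sSup {y : L | f y ≤ T.trans ε₂ (f (sSup {z : L | f z ≤ T.trans ε₁ (f x)}))} ≤
        sSup {y : L | f y ≤ T.trans (ε₁ + ε₂) (f x)}) ∧
    (∀ (ε : ℝ≥0) (x : L), f (sSup {y : L | f y ≤ T.trans ε (f x)}) ≤ T.trans ε (f x)) := by
  have hkey : ∀ q : Q, f (sSup {y : L | f y ≤ q}) ≤ q := fun q =>
    hjoins _ q (fun x hx => hx)
  refine ⟨?_, ?_, ?_, fun ε x => hkey _⟩
  · intro ε x y hxy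
    exact sSup_le_sSup fun z hz => hz.trans ((T.trans ε).mono (hmono hxy))
  · intro ε x
    exact le_sSup (T.le_self ε (f x))
  · intro ε₁ ε₂ x
    apply sSup_le_sSup
    intro z hz
    calc f z ≤ T.trans ε₂ (f (sSup {z : L | f z ≤ T.trans ε₁ (f x)})) := hz
    _ ≤ T.trans ε₂ (T.trans ε₁ (f x)) := (T.trans ε₂).mono (hkey _)
    _ ≤ T.trans (ε₁ + ε₂) (f x) := T.superlinear ε₁ ε₂ (f x)
end

section
/- Let L be a complete lattice, Q a partially ordered set, and f : L → Q a monotone map that respects meets. Then for every q ∈ Q, the element f♯(q) = sInf {x ∈ L | q ≤ f(x)} is the least element of {x ∈ L | q ≤ f(x)}; consequently, for any complete category C and any functor M : L → C, the pointwise right Kan extension f_†M of M along f satisfies a natural isomorphism f_†M ≅ M ∘ f♯, and in particular (f_†M)(q) ≅ M(sInf {x ∈ L | q ≤ f(x)}) for every q ∈ Q. -/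
open CategoryTheory Limits

universe v u

/-- The map `f♯ : Q → L`, `f♯(q) = sInf {x | q ≤ f x}`, as a monotone map. -/
def sharpHom {L : Type v} [CompleteLattice L] {Q : Type v} [PartialOrder Q] (f : L →o Q) :
    Q →o L :=
  ⟨fun q => sInf {x : L | q ≤ f x}, fun _ _ h => sInf_le_sInf fun _ hx => le_trans h hx⟩

/-- If `f : L → Q` respects meets, then `f♯(q)` is the least element of `{x | q ≤ f x}`;
consequently the pointwise right Kan extension `f_†` is naturally isomorphic to
precomposition with `f♯`, and in particular `(f_†M)(q) ≅ M(sInf {x | q ≤ f x})`. -/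
theorem ran_iso_comp_sharp {L : Type v} [CompleteLattice L] {Q : Type v} [PartialOrder Q]
    (f : L →o Q)
    (hmeets : ∀ (S : Set L) (q : Q), (∀ x ∈ S, q ≤ f x) → q ≤ f (sInf S)) :
    (∀ q : Q, IsLeast {x : L | q ≤ f x} (sInf {x : L | q ≤ f x})) ∧
    (∀ (C : Type u) [Category.{v} C] [HasLimits C],
      Nonempty ((f.monotone.functor.ran : (L ⥤ C) ⥤ (Q ⥤ C)) ≅
        (Functor.whiskeringLeft Q L C).obj (sharpHom f).monotone.functor) ∧
      ∀ (M : L ⥤ C) (q : Q),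
        Nonempty ((f.monotone.functor.ran.obj M).obj q ≅ M.obj (sInf {x : L | q ≤ f x}))) := by
  have hleast : ∀ q : Q, IsLeast {x : L | q ≤ f x} (sInf {x : L | q ≤ f x}) := fun q =>
    ⟨hmeets _ q fun x hx => hx, fun x hx => sInf_le hx⟩
  have gc : GaloisConnection (sharpHom f) f := fun q x =>
    ⟨fun h => le_trans ((hleast q).1) (f.monotone h), fun h => sInf_le h⟩
  refine ⟨hleast, fun C _ _ => ?_⟩
  have adj1 : (sharpHom f).monotone.functor ⊣ f.monotone.functor := gc.adjunction
  have adj2 : (Functor.whiskeringLeft L Q C).obj f.monotone.functor ⊣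
      (Functor.whiskeringLeft Q L C).obj (sharpHom f).monotone.functor :=
    Adjunction.whiskerLeft C adj1
  have e : (f.monotone.functor.ran : (L ⥤ C) ⥤ (Q ⥤ C)) ≅
      (Functor.whiskeringLeft Q L C).obj (sharpHom f).monotone.functor :=
    (f.monotone.functor.ranAdjunction C).rightAdjointUniq adj2
  exact ⟨⟨e⟩, fun M q => ⟨(e.app M).app q⟩⟩
end

section
/- Let L be a complete lattice, Q a partially ordered set, and f : L → Q a monotone map. If f respects joins and C is a cocomplete category, then for every functor M : Q → C there is an isomorphism f_*f^*M ≅ M ∘ f ∘ f♭ (the lower pixelization of M equals the pullback of M along f ∘ f♭), natural in M. Dually, if f respects meets and C is a complete category, then for every functor M : Q → C there is an isomorphism f_†f^*M ≅ M ∘ f ∘ f♯, natural in M. -/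
/-!
Respecting joins makes `f♭` a right adjoint of `f`, so `f ⊣ f♭` as functors of posets. Precomposing
with `f♭` is then left adjoint to `f^*`, which forces it to agree with `f_*`; hence
`f_* f^* M ≅ M ∘ f ∘ f♭`. Dually, respecting meets gives `f♯ ⊣ f`, and `f_†` is precomposition
with `f♯`.
-/

open CategoryTheory Limits

universe v u

/-- The map `f♭ : Q → L`, `f♭(q) = sSup {x | f x ≤ q}`, as a monotone map. -/
def flatHom {L : Type v} [CompleteLattice L] {Q : Type v} [PartialOrder Q] (f : L →o Q) :
    Q →o L :=
  ⟨fun q => sSup {x : L | f x ≤ q}, fun _ _ h => sSup_le_sSup fun _ hx => le_trans hx h⟩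

namespace CategoryTheory.Adjunction

variable {D E : Type*} [Category D] [Category E] {F : D ⥤ E} {G : E ⥤ D}

noncomputable def lanIsoWhiskeringLeft (adj : F ⊣ G) (H : Type*) [Category H]
    [∀ M : D ⥤ H, F.HasLeftKanExtension M] :
    F.lan ≅ (Functor.whiskeringLeft E D H).obj G :=
  (F.lanAdjunction H).leftAdjointUniq (adj.whiskerLeft H)

noncomputable def ranIsoWhiskeringLeft (adj : G ⊣ F) (H : Type*) [Category H]
    [∀ M : D ⥤ H, F.HasRightKanExtension M] :
    F.ran ≅ (Functor.whiskeringLeft E D H).obj G :=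
  (F.ranAdjunction H).rightAdjointUniq (adj.whiskerLeft H)

end CategoryTheory.Adjunction

section Pixelization

variable {L : Type v} [CompleteLattice L] {Q : Type v} [PartialOrder Q] (f : L →o Q)

theorem galoisConnection_flatHom
    (hf : ∀ (S : Set L) (q : Q), (∀ x ∈ S, f x ≤ q) → f (sSup S) ≤ q) :
    GaloisConnection f (flatHom f) := fun _ q =>
  ⟨fun h => le_sSup h, fun h => (f.mono h).trans (hf {x | f x ≤ q} q fun _ hx => hx)⟩

theorem galoisConnection_sharpHom
    (hf : ∀ (S : Set L) (q : Q), (∀ x ∈ S, q ≤ f x) → q ≤ f (sInf S)) :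
    GaloisConnection (sharpHom f) f := fun q _ =>
  ⟨fun h => (hf {x | q ≤ f x} q fun _ hx => hx).trans (f.mono h), fun h => sInf_le h⟩

end Pixelization

/-- If `f : L → Q` respects joins, the lower pixelization `f_*f^*` is naturally isomorphic
(in `M`) to precomposition with `f ∘ f♭`; dually, if `f` respects meets, the upper
pixelization `f_†f^*` is naturally isomorphic to precomposition with `f ∘ f♯`. -/
theorem pixelization_iso_pullback {L : Type v} [CompleteLattice L]
    {Q : Type v} [PartialOrder Q] (f : L →o Q) :
    ((∀ (S : Set L) (q : Q), (∀ x ∈ S, f x ≤ q) → f (sSup S) ≤ q) →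
      ∀ (C : Type u) [Category.{v} C] [HasColimits C],
        Nonempty
          (((Functor.whiskeringLeft L Q C).obj f.monotone.functor ⋙ f.monotone.functor.lan :
              (Q ⥤ C) ⥤ (Q ⥤ C)) ≅
            (Functor.whiskeringLeft Q Q C).obj (f.comp (flatHom f)).monotone.functor)) ∧
    ((∀ (S : Set L) (q : Q), (∀ x ∈ S, q ≤ f x) → q ≤ f (sInf S)) →
      ∀ (C : Type u) [Category.{v} C] [HasLimits C],
        Nonempty
          (((Functor.whiskeringLeft L Q C).obj f.monotone.functor ⋙ f.monotone.functor.ran :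
              (Q ⥤ C) ⥤ (Q ⥤ C)) ≅
            (Functor.whiskeringLeft Q Q C).obj (f.comp (sharpHom f)).monotone.functor)) :=
  -- `(f.comp g).monotone.functor` is definitionally `g.monotone.functor ⋙ f.monotone.functor`.
  ⟨fun hf C _ _ => ⟨Functor.isoWhiskerLeft _
      ((galoisConnection_flatHom f hf).adjunction.lanIsoWhiskeringLeft C)⟩,
    fun hf C _ _ => ⟨Functor.isoWhiskerLeft _
      ((galoisConnection_sharpHom f hf).adjunction.ranIsoWhiskeringLeft C)⟩⟩
end

section
/- Fix an integer n ≥ 1 and δ > 0, and equip ℝⁿ (functions Fin n → ℝ) with the sup metric d_∞(x,y) = max_i |x_i − y_i|. Then for every open set V ⊆ ℝⁿ there exists a grid open U with V ⊆ U ⊆ T_δ(V), where T_δ(V) = ⋃_{x ∈ V} B_∞(x, δ) is the open δ-thickening of V. In other words, the inclusion of the poset of grid opens (ordered by containment) into the poset of open subsets of ℝⁿ is a δ-approximation with respect to the ℓ∞ metric translation. -/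
/-- The vertex set of the δ-grid cell `(k, A)` in `ℝⁿ` (with the sup metric):
the points `δ • (k + ε)` for `ε ∈ {0,1}ⁿ` with `ε i = 0` for `i ∉ A`. -/
def gridVertices (n : ℕ) (δ : ℝ) (k : Fin n → ℤ) (A : Set (Fin n)) : Set (Fin n → ℝ) :=
  {v | ∃ ε : Fin n → ℝ, (∀ i, ε i = 0 ∨ ε i = 1) ∧ (∀ i, i ∉ A → ε i = 0) ∧
        v = fun i => δ * ((k i : ℝ) + ε i)}

/-- The open star of the δ-grid cell `(k, A)`: the intersection of the open sup-metric
balls of radius δ around the vertices of the cell. (Note: `Fin n → ℝ` carries the sup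
metric as its product metric.) -/
def gridStar (n : ℕ) (δ : ℝ) (k : Fin n → ℤ) (A : Set (Fin n)) : Set (Fin n → ℝ) :=
  ⋂ v ∈ gridVertices n δ k A, Metric.ball v δ

/-- A grid open: an arbitrary union of open stars of δ-grid cells. -/
def IsGridOpen (n : ℕ) (δ : ℝ) (U : Set (Fin n → ℝ)) : Prop :=
  ∃ S : Set ((Fin n → ℤ) × Set (Fin n)), U = ⋃ c ∈ S, gridStar n δ c.1 c.2

/-- The inclusion of grid opens into the open subsets of `ℝⁿ` (with the sup metric) is a
δ-approximation: every open set `V` satisfies `V ⊆ U ⊆ T_δ(V)` for some grid open `U`,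
where `T_δ(V) = ⋃_{x ∈ V} B_∞(x, δ)` is the δ-thickening with respect to the metric
translation. -/
theorem gridOpen_delta_approximation (n : ℕ) (hn : 1 ≤ n) (δ : ℝ) (hδ : 0 < δ)
    (V : Set (Fin n → ℝ)) (hV : IsOpen V) :
    ∃ U : Set (Fin n → ℝ), IsGridOpen n δ U ∧ V ⊆ U ∧
      U ⊆ ⋃ x ∈ V, Metric.ball x δ := by
  classical
  set k : (Fin n → ℝ) → Fin n → ℤ := fun x i => ⌊x i / δ⌋ with hk
  set A : (Fin n → ℝ) → Set (Fin n) := fun x => {i | x i ≠ δ * (⌊x i / δ⌋ : ℤ)} with hA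
  have hlb : ∀ (x : Fin n → ℝ) (i : Fin n), δ * ((k x i : ℝ)) ≤ x i := by
    intro x i
    have h := Int.floor_le (x i / δ)
    have := mul_le_mul_of_nonneg_left h hδ.le
    calc δ * ((k x i : ℝ)) ≤ δ * (x i / δ) := this
      _ = x i := by field_simp
  have hub : ∀ (x : Fin n → ℝ) (i : Fin n), x i < δ * ((k x i : ℝ) + 1) := by
    intro x i
    have h : x i / δ < (k x i : ℝ) + 1 := by
      exact_mod_cast Int.lt_floor_add_one (x i / δ)
    calc x i = δ * (x i / δ) := by field_simp
      _ < δ * ((k x i : ℝ) + 1) := mul_lt_mul_of_pos_left h hδ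
  -- every point lies in the star of its own cell
  have hmem : ∀ x, x ∈ gridStar n δ (k x) (A x) := by
    intro x
    simp only [gridStar, Set.mem_iInter]
    rintro v ⟨ε, hε01, hε0, rfl⟩
    rw [Metric.mem_ball, dist_pi_lt_iff hδ]
    intro i
    rw [Real.dist_eq, abs_lt]
    have h1 := hlb x i
    have h2 := hub x i
    rcases hε01 i with h0 | h1'
    · rw [h0]
      constructor <;> nlinarith
    · have hiA : i ∈ A x := by
        by_contra h
        have := hε0 i h
        rw [this] at h1'
        norm_num at h1'
      have hne : x i ≠ δ * ((k x i : ℝ)) := hiA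
      have hlt : δ * ((k x i : ℝ)) < x i := lt_of_le_of_ne h1 (Ne.symm hne)
      rw [h1']
      constructor <;> nlinarith
  -- the star of the cell of x is contained in the δ-ball around x
  have hsub : ∀ x, gridStar n δ (k x) (A x) ⊆ Metric.ball x δ := by
    intro x y hy
    simp only [gridStar, Set.mem_iInter] at hy
    rw [Metric.mem_ball, dist_pi_lt_iff hδ]
    intro i
    have h1 := hlb x i
    have h2 := hub x i
    -- vertex with ε ≡ 0
    have hv0 : y ∈ Metric.ball (fun j => δ * ((k x j : ℝ) + (0 : ℝ))) δ := by
      apply hy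
      exact ⟨fun _ => 0, fun _ => Or.inl rfl, fun _ _ => rfl, rfl⟩
    have hy0 : |y i - δ * ((k x i : ℝ))| < δ := by
      have := lt_of_le_of_lt (dist_le_pi_dist y _ i) (Metric.mem_ball.mp hv0)
      rw [Real.dist_eq] at this
      simpa using this
    rw [Real.dist_eq, abs_lt]
    rw [abs_lt] at hy0
    by_cases hiA : i ∈ A x
    · -- also use the vertex with ε = indicator of {i}
      have hv1 : y ∈ Metric.ball
          (fun j => δ * ((k x j : ℝ) + (if j = i then (1:ℝ) else 0))) δ := by
        apply hy
        refine ⟨fun j => if j = i then (1:ℝ) else 0, ?_, ?_, rfl⟩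
        · intro j; by_cases h : j = i <;> simp [h]
        · intro j hj
          have : j ≠ i := fun h => hj (h ▸ hiA)
          simp [this]
      have hy1 : |y i - δ * ((k x i : ℝ) + 1)| < δ := by
        have := lt_of_le_of_lt (dist_le_pi_dist y _ i) (Metric.mem_ball.mp hv1)
        rw [Real.dist_eq] at this
        simpa using this
      rw [abs_lt] at hy1
      have hne : x i ≠ δ * ((k x i : ℝ)) := hiA
      have hlt : δ * ((k x i : ℝ)) < x i := lt_of_le_of_ne h1 (Ne.symm hne)
      constructor <;> nlinarith
    · have hxeq : x i = δ * ((k x i : ℝ)) := by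
        by_contra h
        exact hiA h
      constructor <;> nlinarith
  refine ⟨⋃ x ∈ V, gridStar n δ (k x) (A x), ?_, ?_, ?_⟩
  · refine ⟨(fun x => (k x, A x)) '' V, ?_⟩
    rw [Set.biUnion_image]
  · intro x hx
    exact Set.mem_biUnion hx (hmem x)
  · intro y hy
    rw [Set.mem_iUnion₂] at hy
    obtain ⟨x, hxV, hyx⟩ := hy
    exact Set.mem_biUnion hxV (hsub x hyx)
end

section
/- Let P be a partially ordered set, C a cocomplete category, and M : P → C any functor. Let ι : P → Down(P) be the monotone map sending p to the principal down set D_p = {q ∈ P | q ≤ p}. Then the pointwise left Kan extension ι_*M = Lan_ι M : Down(P) → C is a basic cosheaf: for every down set S ∈ Down(P) and every basic cover U of S, the canonical map colim_{U ∈ U} (ι_*M)(U) → (ι_*M)(S) is an isomorphism. -/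
open CategoryTheory Limits

universe v u

variable {P : Type v} [PartialOrder P]

/-- The monotone map `ι : P → Down(P)` sending `p` to the principal down set
`D_p = {q | q ≤ p}`. -/
def principalIota (P : Type v) [PartialOrder P] : P →o LowerSet P :=
  ⟨fun p => LowerSet.Iic p, fun _ _ h _ hx => le_trans hx h⟩

/-- A basic cover of a down set `S`: a family of down sets whose union is `S` and such that
the intersection of any two members is a union of members of the family. -/
def IsBasicCover (S : LowerSet P) (U : Set (LowerSet P)) : Prop :=
  sSup U = S ∧ ∀ V₁ ∈ U, ∀ V₂ ∈ U, ∃ W ⊆ U, sSup W = V₁ ⊓ V₂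

/-- The inclusion of the full subposet of `Down(P)` spanned by a family `U` of down sets. -/
def coverInclusion (U : Set (LowerSet P)) : (↥U) ⥤ LowerSet P :=
  (⟨fun V => (V : LowerSet P), fun _ _ h => h⟩ : ↥U →o LowerSet P).monotone.functor

/-- The canonical cocone on the restriction of `F : Down(P) ⥤ C` to a family of down sets
contained in `S`, with apex `F(S)`. -/
def coverCocone {C : Type u} [Category.{v} C] (F : LowerSet P ⥤ C) (S : LowerSet P)
    (U : Set (LowerSet P)) (hle : ∀ V ∈ U, V ≤ S) :
    Cocone (coverInclusion U ⋙ F) where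
  pt := F.obj S
  ι :=
    { app := fun V => F.map (homOfLE (hle V.1 V.2))
      naturality := fun _ _ _ => by
        dsimp [coverInclusion, Monotone.functor]
        rw [Category.comp_id, ← F.map_comp]
        exact congrArg F.map (Subsingleton.elim _ _) }

/-!
For a pointwise left Kan extension, `(ι_*M)(V) = colim_{p ∈ V} M p`. A cocone over the
restriction of `ι_*M` to a basic cover `U` of `S` yields a cocone over the points of `S` by
routing each `p ∈ S` through some member of `U` containing it. The choice does not matter:
two members containing `p` meet in a union of members, one of which contains `p`. The colimit
property of `(ι_*M)(S)` then provides the inverse of the comparison map.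
-/

lemma principalIota_le_iff {p : P} {V : LowerSet P} :
    (principalIota P).monotone.functor.obj p ≤ V ↔ p ∈ V :=
  LowerSet.Iic_le

lemma LowerSet.exists_mem_of_le_sSup {U : Set (LowerSet P)} {S : LowerSet P}
    (hS : S ≤ sSup U) {p : P} (hp : p ∈ S) : ∃ V : U, p ∈ V.1 := by
  obtain ⟨V, hVU, hpV⟩ := LowerSet.mem_sSup_iff.1 (hS hp)
  exact ⟨⟨V, hVU⟩, hpV⟩

def InfsAreUnions (U : Set (LowerSet P)) : Prop :=
  ∀ V₁ ∈ U, ∀ V₂ ∈ U, ∃ W ⊆ U, sSup W = V₁ ⊓ V₂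

section PointwiseLeftKanExtension

variable {C : Type*} [Category C] {M : P ⥤ C} {F : LowerSet P ⥤ C}
  (α : M ⟶ (principalIota P).monotone.functor ⋙ F)

/-- The legs of `(LeftExtension.mk F α).coconeAt V`, which exhibit `F V = colim_{p ∈ V} M p` when
`F` is a pointwise left Kan extension. -/
def legOfMem {p : P} {V : LowerSet P} (hp : p ∈ V) : M.obj p ⟶ F.obj V :=
  α.app p ≫ F.map (homOfLE (principalIota_le_iff.2 hp))

lemma legOfMem_comp_map {p : P} {V W : LowerSet P} (hp : p ∈ V) (f : V ⟶ W) :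
    legOfMem α hp ≫ F.map f = legOfMem α (f.le hp) := by
  rw [legOfMem, Category.assoc, ← F.map_comp]
  rfl

lemma map_comp_legOfMem {p q : P} (f : p ⟶ q) {V : LowerSet P} (hq : q ∈ V) :
    M.map f ≫ legOfMem α hq = legOfMem α (V.lower f.le hq) := by
  rw [legOfMem, α.naturality_assoc, Functor.comp_map, ← F.map_comp]
  rfl

variable {U : Set (LowerSet P)}

lemma legOfMem_comp_ι_app_of_le (c : Cocone (coverInclusion U ⋙ F)) {p : P} {V W : U}
    (hVW : V ≤ W) (hp : p ∈ V.1) :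
    legOfMem α hp ≫ c.ι.app V = legOfMem α (hVW hp) ≫ c.ι.app W := by
  rw [← c.w (homOfLE hVW)]
  exact (Category.assoc _ _ _).symm.trans (legOfMem_comp_map α hp _ =≫ c.ι.app W)

lemma legOfMem_comp_ι_app_eq (hU : InfsAreUnions U) (c : Cocone (coverInclusion U ⋙ F))
    {p : P} {V₁ V₂ : U} (hp₁ : p ∈ V₁.1) (hp₂ : p ∈ V₂.1) :
    legOfMem α hp₁ ≫ c.ι.app V₁ = legOfMem α hp₂ ≫ c.ι.app V₂ := by
  obtain ⟨W, hWU, hW⟩ := hU V₁ V₁.2 V₂ V₂.2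
  obtain ⟨W₀, hW₀W, hpW₀⟩ :=
    LowerSet.mem_sSup_iff.1 (hW ▸ LowerSet.mem_inf_iff.2 ⟨hp₁, hp₂⟩ : p ∈ sSup W)
  have hW₀ : W₀ ≤ V₁.1 ⊓ V₂.1 := hW ▸ le_sSup hW₀W
  rw [← legOfMem_comp_ι_app_of_le α c (W := V₁) (V := ⟨W₀, hWU hW₀W⟩)
      (hW₀.trans inf_le_left) hpW₀,
    ← legOfMem_comp_ι_app_of_le α c (W := V₂) (V := ⟨W₀, hWU hW₀W⟩)
      (hW₀.trans inf_le_right) hpW₀]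

variable {S : LowerSet P}

/-- Routes `p ∈ S` through a chosen member of `U` containing it; by `legOfMem_comp_ι_app_eq`
the choice is irrelevant. -/
noncomputable def coverDescCocone (hU : InfsAreUnions U) (hS : S ≤ sSup U)
    (c : Cocone (coverInclusion U ⋙ F)) :
    Cocone (CostructuredArrow.proj (principalIota P).monotone.functor S ⋙ M) where
  pt := c.pt
  ι :=
    { app := fun g =>
        have hV := LowerSet.exists_mem_of_le_sSup hS (principalIota_le_iff.1 g.hom.le)
        legOfMem α hV.choose_spec ≫ c.ι.app hV.choose
      naturality := fun g₁ g₂ f => by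
        dsimp
        rw [Category.comp_id]
        exact (Category.assoc _ _ _).symm.trans
          ((map_comp_legOfMem α _ _ =≫ _).trans (legOfMem_comp_ι_app_eq α hU c _ _)) }

lemma legOfMem_comp_desc_coverDescCocone
    (hF : (Functor.LeftExtension.mk F α).IsPointwiseLeftKanExtensionAt S) (hU : InfsAreUnions U)
    (hS : S ≤ sSup U) (c : Cocone (coverInclusion U ⋙ F)) {p : P} (hpS : p ∈ S) {V : U}
    (hp : p ∈ V.1) :
    (legOfMem α hpS ≫ hF.desc (coverDescCocone α hU hS c) : M.obj p ⟶ c.pt)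
      = legOfMem α hp ≫ c.ι.app V :=
  (hF.fac _ (CostructuredArrow.mk (homOfLE (principalIota_le_iff.2 hpS)))).trans
    (legOfMem_comp_ι_app_eq α hU c _ _)

noncomputable def isColimitCoverCocone
    (hF : (Functor.LeftExtension.mk F α).IsPointwiseLeftKanExtension)
    (hU : IsBasicCover S U) (hle : ∀ V ∈ U, V ≤ S) : IsColimit (coverCocone F S U hle) where
  desc c := (hF S).desc (coverDescCocone α hU.2 hU.1.ge c)
  fac c V := (hF V).hom_ext fun g => by
    have hp : g.left ∈ V.1 := principalIota_le_iff.1 g.hom.le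
    exact (Category.assoc _ _ _).symm.trans ((legOfMem_comp_map α hp _ =≫ _).trans
      (legOfMem_comp_desc_coverDescCocone α (hF S) hU.2 hU.1.ge c _ hp))
  uniq c m hm := (hF S).hom_ext fun g => by
    obtain ⟨V, hp⟩ := LowerSet.exists_mem_of_le_sSup hU.1.ge (principalIota_le_iff.1 g.hom.le)
    calc (legOfMem α (hle V.1 V.2 hp) ≫ m : M.obj g.left ⟶ c.pt)
        = legOfMem α hp ≫ F.map (homOfLE (hle V.1 V.2)) ≫ m :=
          (legOfMem_comp_map α hp _ =≫ m).symm.trans (Category.assoc _ _ _)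
      _ = (legOfMem α hp ≫ c.ι.app V : M.obj g.left ⟶ c.pt) := legOfMem α hp ≫= hm V
      _ = (legOfMem α (hle V.1 V.2 hp) ≫ (hF S).desc (coverDescCocone α hU.2 hU.1.ge c) :
            M.obj g.left ⟶ c.pt) :=
          (legOfMem_comp_desc_coverDescCocone α (hF S) hU.2 hU.1.ge c _ hp).symm

end PointwiseLeftKanExtension

/-- The left Kan extension `ι_*M` of any `P`-module `M` along `ι : P → Down(P)` is a basic
cosheaf: for every down set `S` and every basic cover `U` of `S`, the canonical map
`colim_{V ∈ U} (ι_*M)(V) → (ι_*M)(S)` is an isomorphism. -/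
theorem lan_principal_isBasicCosheaf {C : Type u} [Category.{v} C] [HasColimits C]
    (M : P ⥤ C) (S : LowerSet P) (U : Set (LowerSet P)) (hU : IsBasicCover S U) :
    IsIso
      (colimit.desc (coverInclusion U ⋙ (principalIota P).monotone.functor.lan.obj M)
        (coverCocone ((principalIota P).monotone.functor.lan.obj M) S U
          (fun V hV => hU.1 ▸ le_sSup hV))) :=
  (colimit.isColimit _).nonempty_isColimit_iff_isIso_desc.mp
    ⟨isColimitCoverCocone _ (Functor.isPointwiseLeftKanExtensionOfIsLeftKanExtension _
      ((principalIota P).monotone.functor.lanUnit.app M)) hU _⟩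
end
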